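/- arXiv:math/0507191 — 4 statements merged into one kernel-verified Lean document; each statement's English description precedes it below -/
import Mathlib

section
/- The Baumslag-Solitar group BS(1,p²) = ⟨a,b | aba⁻¹ = b^{p²}⟩ embeds as an index-2 subgroup of the group B₂(ℤ[1/p]) of upper triangular 2×2 matrices of determinant 1 over ℤ[1/p]. -/
/-- The Baumslag–Solitar relation `a b a⁻¹ (b^m)⁻¹` in the free group on `Bool`
(`a = of true`, `b = of false`). -/
def bsRels (m : ℕ) : Set (FreeGroup Bool) :=
  {FreeGroup.of true * FreeGroup.of false * (FreeGroup.of true)⁻¹ *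
    (FreeGroup.of false ^ m)⁻¹}

/-- The Baumslag–Solitar group `BS(1, m) = ⟨a, b ∣ a b a⁻¹ = b^m⟩`. -/
def BaumslagSolitar (m : ℕ) : Type := PresentedGroup (bsRels m)

instance (m : ℕ) : Group (BaumslagSolitar m) := by
  unfold BaumslagSolitar; infer_instance

/-- The group `B₂(R)` of upper triangular matrices in `SL₂(R)`. -/
def upperTriangularSL2 (R : Type*) [CommRing R] :
    Subgroup (Matrix.SpecialLinearGroup (Fin 2) R) where
  carrier := {A | (A : Matrix (Fin 2) (Fin 2) R) 1 0 = 0}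
  one_mem' := by
    simp [Matrix.SpecialLinearGroup.coe_one, Matrix.one_apply]
  mul_mem' := by
    intro A B hA hB
    simp only [Set.mem_setOf_eq] at *
    simp [Matrix.SpecialLinearGroup.coe_mul, Matrix.mul_apply, Fin.sum_univ_two, hA, hB]
  inv_mem' := by
    intro A hA
    simp only [Set.mem_setOf_eq] at *
    rw [Matrix.SpecialLinearGroup.coe_inv, Matrix.adjugate_fin_two]
    simp [hA]


/-!
Send `a ↦ diag(p, p⁻¹)` and `b ↦ [[1, 1], [0, 1]]`: conjugation by `diag(u, u⁻¹)` multiplies the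
upper right entry by `u²`, so the relation holds. Every element of `BS(1, m)` is `a⁻ⁱ bⁿ aʲ`, whose
image has top left entry `p^(j - i)`; hence a kernel element has `i = j`, then `bⁿ = 1` and `n = 0`.
The units of `ℤ[1/p]` are the `±pᵏ`, and the image consists exactly of the matrices whose top left
entry is some `pᵏ`: the diagonal part is `aᵏ`, and `[[1, c/pᵉ], [0, 1]] = a⁻ᵉ b^(pᵉc) aᵉ`. So the
image is the preimage of the index two subgroup `⟨p⟩ ≤ ℤ[1/p]ˣ` under the surjection `g ↦ g₀₀`.
-/

namespace upperTriangularSL2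

variable {R : Type*} [CommRing R]

lemma ext {g h : upperTriangularSL2 R} (H : (g : Matrix (Fin 2) (Fin 2) R) = h) : g = h :=
  Subtype.ext (Subtype.ext H)

lemma apply_one_zero (g : upperTriangularSL2 R) : (g : Matrix (Fin 2) (Fin 2) R) 1 0 = 0 := g.2

lemma apply_zero_zero_mul_apply_one_one (g : upperTriangularSL2 R) :
    (g : Matrix (Fin 2) (Fin 2) R) 0 0 * (g : Matrix (Fin 2) (Fin 2) R) 1 1 = 1 := by
  have h := g.1.2
  rwa [Matrix.det_fin_two, apply_one_zero, mul_zero, sub_zero] at h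

def unipotent (x : R) : upperTriangularSL2 R :=
  ⟨⟨!![1, x; 0, 1], by simp [Matrix.det_fin_two_of]⟩, rfl⟩

@[simp]
lemma coe_unipotent (x : R) :
    (unipotent x : Matrix (Fin 2) (Fin 2) R) = !![1, x; 0, 1] := rfl

lemma unipotent_add (x y : R) : unipotent (x + y) = unipotent x * unipotent y := by
  apply ext; simp [add_comm]

lemma unipotent_zero : unipotent (0 : R) = 1 := by
  apply ext; simp [Matrix.one_fin_two]

lemma unipotent_zpow (x : R) (n : ℤ) : unipotent x ^ n = unipotent (n • x) :=
  let f : Multiplicative R →* upperTriangularSL2 R :=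
    { toFun := fun y ↦ unipotent y.toAdd
      map_one' := unipotent_zero
      map_mul' := fun y z ↦ unipotent_add y.toAdd z.toAdd }
  (map_zpow f (.ofAdd x) n).symm

lemma not_isOfFinOrder_unipotent_one [CharZero R] : ¬IsOfFinOrder (unipotent (1 : R)) := by
  rw [isOfFinOrder_iff_zpow_eq_one]
  rintro ⟨n, hn, h⟩
  have h01 := congrArg (fun g : upperTriangularSL2 R ↦ (g : Matrix (Fin 2) (Fin 2) R) 0 1) h
  simp [unipotent_zpow] at h01
  exact hn h01

def diagonal : Rˣ →* upperTriangularSL2 R where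
  toFun u := ⟨⟨!![(u : R), 0; 0, ((u⁻¹ : Rˣ) : R)], by simp [Matrix.det_fin_two_of]⟩, rfl⟩
  map_one' := by apply ext; simp [Matrix.one_fin_two]
  map_mul' u v := by
    apply ext
    change _ = !![(u : R), 0; 0, ((u⁻¹ : Rˣ) : R)] * !![(v : R), 0; 0, ((v⁻¹ : Rˣ) : R)]
    simp [mul_comm]

@[simp]
lemma coe_diagonal (u : Rˣ) :
    (diagonal u : Matrix (Fin 2) (Fin 2) R) = !![(u : R), 0; 0, ((u⁻¹ : Rˣ) : R)] := rfl

lemma diagonal_mul_unipotent_mul_inv (u : Rˣ) (x : R) :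
    diagonal u * unipotent x * (diagonal u)⁻¹ = unipotent (u * u * x) := by
  rw [← map_inv]; apply ext; simp [mul_left_comm, mul_comm]

def topLeft : upperTriangularSL2 R →* Rˣ where
  toFun g := Units.mkOfMulEqOne _ _ (apply_zero_zero_mul_apply_one_one g)
  map_one' := by ext; simp
  map_mul' g h := by ext; simp [Matrix.mul_apply, Fin.sum_univ_two, apply_one_zero]

@[simp]
lemma coe_topLeft (g : upperTriangularSL2 R) :
    (topLeft g : R) = (g : Matrix (Fin 2) (Fin 2) R) 0 0 := rfl

@[simp]
lemma coe_topLeft_inv (g : upperTriangularSL2 R) :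
    (((topLeft g)⁻¹ : Rˣ) : R) = (g : Matrix (Fin 2) (Fin 2) R) 1 1 := rfl

@[simp]
lemma topLeft_diagonal (u : Rˣ) : topLeft (diagonal u) = u := by ext; simp

@[simp]
lemma topLeft_unipotent (x : R) : topLeft (unipotent x) = 1 := by ext; simp

lemma eq_diagonal_topLeft_mul_unipotent (g : upperTriangularSL2 R) :
    g = diagonal (topLeft g) *
      unipotent ((g : Matrix (Fin 2) (Fin 2) R) 1 1 * (g : Matrix (Fin 2) (Fin 2) R) 0 1) := by
  have hdet := apply_zero_zero_mul_apply_one_one g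
  apply ext
  ext i j
  fin_cases i <;> fin_cases j <;> simp [apply_one_zero, ← mul_assoc, hdet]

end upperTriangularSL2

namespace BaumslagSolitar

variable {m : ℕ}

def a : BaumslagSolitar m := PresentedGroup.of true

def b : BaumslagSolitar m := PresentedGroup.of false

lemma a_mul_b_mul_a_inv : (a : BaumslagSolitar m) * b * a⁻¹ = b ^ m :=
  mul_inv_eq_one.mp (PresentedGroup.one_of_mem (Set.mem_singleton _))

lemma a_mul_b_zpow_mul_a_inv (n : ℤ) :
    (a : BaumslagSolitar m) * b ^ n * a⁻¹ = b ^ ((m : ℤ) * n) := by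
  rw [← conj_zpow, a_mul_b_mul_a_inv, ← zpow_natCast, ← zpow_mul]

lemma a_pow_mul_b_zpow (j : ℕ) (n : ℤ) :
    (a : BaumslagSolitar m) ^ j * b ^ n = b ^ ((m : ℤ) ^ j * n) * a ^ j := by
  induction j generalizing n with
  | zero => simp
  | succ j ih =>
    calc a ^ (j + 1) * b ^ n = a ^ j * (a * b ^ n * a⁻¹) * a := by group
      _ = b ^ ((m : ℤ) ^ (j + 1) * n) * a ^ (j + 1) := by
        rw [a_mul_b_zpow_mul_a_inv, ih, mul_assoc, ← pow_succ, ← mul_assoc, ← pow_succ]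

lemma exists_eq_inv_pow_mul_zpow_mul_pow (g : BaumslagSolitar m) :
    ∃ (i j : ℕ) (n : ℤ), g = a⁻¹ ^ i * b ^ n * a ^ j := by
  have hg : g ∈ Subgroup.closure (Set.range PresentedGroup.of) := by
    rw [PresentedGroup.closure_range_of]; trivial
  have mul_b_zpow (i j : ℕ) (n k : ℤ) : (a : BaumslagSolitar m)⁻¹ ^ i * b ^ n * a ^ j * b ^ k =
      a⁻¹ ^ i * b ^ (n + (m : ℤ) ^ j * k) * a ^ j := by
    rw [mul_assoc, a_pow_mul_b_zpow, zpow_add]; group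
  induction hg using Subgroup.closure_induction_right with
  | one => exact ⟨0, 0, 0, by simp⟩
  | mul_right g _ x hx ih =>
    obtain ⟨i, j, n, rfl⟩ := ih
    obtain ⟨_ | _, rfl⟩ := hx
    · exact ⟨i, j, n + (m : ℤ) ^ j * 1, by rw [← mul_b_zpow, zpow_one]; rfl⟩
    · exact ⟨i, j + 1, n, by rw [pow_succ, ← mul_assoc]; rfl⟩
  | mul_inv_cancel g _ x hx ih =>
    obtain ⟨i, j, n, rfl⟩ := ih
    obtain ⟨_ | _, rfl⟩ := hx
    · exact ⟨i, j, n + (m : ℤ) ^ j * (-1), by rw [← mul_b_zpow, zpow_neg_one]; rfl⟩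
    · cases j with
      | zero =>
        refine ⟨i + 1, 0, (m : ℤ) * n, ?_⟩
        rw [← a_mul_b_zpow_mul_a_inv]
        change _ * a⁻¹ = _
        group
      | succ j => exact ⟨i, j, n, by change _ * a⁻¹ = _; group⟩

lemma closure_a_b_eq_top : Subgroup.closure {a, b} = (⊤ : Subgroup (BaumslagSolitar m)) := by
  refine eq_top_iff.mpr fun g _ ↦ ?_
  obtain ⟨i, j, n, rfl⟩ := exists_eq_inv_pow_mul_zpow_mul_pow g
  have ha : a ∈ Subgroup.closure {a, (b : BaumslagSolitar m)} := Subgroup.subset_closure (by simp)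
  have hb : b ∈ Subgroup.closure {a, (b : BaumslagSolitar m)} := Subgroup.subset_closure (by simp)
  exact mul_mem (mul_mem (pow_mem (inv_mem ha) i) (zpow_mem hb n)) (pow_mem ha j)

variable {G : Type*} [Group G] {x y : G}

def lift (h : x * y * x⁻¹ = y ^ m) : BaumslagSolitar m →* G :=
  PresentedGroup.toGroup (f := fun c ↦ cond c x y) <| by
    rintro _ rfl
    simpa [mul_inv_eq_one] using h

@[simp]
lemma lift_a (h : x * y * x⁻¹ = y ^ m) : lift h a = x := PresentedGroup.toGroup.of _

@[simp]
lemma lift_b (h : x * y * x⁻¹ = y ^ m) : lift h b = y := PresentedGroup.toGroup.of _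

lemma range_lift (h : x * y * x⁻¹ = y ^ m) : (lift h).range = Subgroup.closure {x, y} := by
  rw [MonoidHom.range_eq_map, ← closure_a_b_eq_top, MonoidHom.map_closure, Set.image_pair, lift_a,
    lift_b]

lemma lift_injective {H : Type*} [Group H] (h : x * y * x⁻¹ = y ^ m) (f : G →* H)
    (hfx : ¬IsOfFinOrder (f x)) (hfy : f y = 1) (hy : ¬IsOfFinOrder y) :
    Function.Injective (lift h) := by
  rw [injective_iff_map_eq_one]
  intro g hg
  obtain ⟨i, j, n, rfl⟩ := exists_eq_inv_pow_mul_zpow_mul_pow g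
  simp only [map_mul, map_pow, map_inv, map_zpow, lift_a, lift_b] at hg
  obtain rfl : i = j := by
    have hf := congrArg f hg
    simp only [map_mul, map_pow, map_inv, map_zpow, hfy, one_zpow, mul_one, map_one] at hf
    rw [inv_pow, inv_mul_eq_one] at hf
    have hij : f x ^ (i : ℤ) = f x ^ (j : ℤ) := by simpa only [zpow_natCast] using hf
    exact_mod_cast injective_zpow_iff_not_isOfFinOrder.mpr hfx hij
  obtain rfl : n = 0 := by
    rw [inv_pow] at hg
    have hyn : y ^ n = 1 := (conj_eq_one_iff (a := (x ^ i)⁻¹)).mp (by rwa [inv_inv])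
    exact injective_zpow_iff_not_isOfFinOrder.mpr hy (by simpa using hyn)
  simp

end BaumslagSolitar

local notation "ℤ[1/" p "]" => Localization.Away (p : ℤ)

section IntAway

variable {p : ℕ}

lemma Int.algebraMap_away_injective (hp : p ≠ 0) : Function.Injective (algebraMap ℤ ℤ[1/p]) :=
  IsLocalization.injective _
    (powers_le_nonZeroDivisors_of_noZeroDivisors (Int.natCast_ne_zero.mpr hp))

instance [NeZero p] : CharZero ℤ[1/p] :=
  charZero_of_injective_algebraMap (Int.algebraMap_away_injective (NeZero.ne p))

variable (p) in
noncomputable def awayUnit : ℤ[1/p]ˣ :=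
  (IsLocalization.Away.algebraMap_isUnit (p : ℤ)).unit

@[simp]
lemma coe_awayUnit : (awayUnit p : ℤ[1/p]) = algebraMap ℤ _ p := rfl

lemma not_isOfFinOrder_awayUnit (hp : 1 < p) : ¬IsOfFinOrder (awayUnit p) := by
  rw [isOfFinOrder_iff_pow_eq_one]
  rintro ⟨n, hn, h⟩
  have h' := congrArg (fun u : ℤ[1/p]ˣ ↦ (u : ℤ[1/p])) h
  rw [Units.val_pow_eq_pow_val, coe_awayUnit, Units.val_one, ← map_pow,
    ← map_one (algebraMap ℤ _)] at h'
  have hpn : p ^ n = 1 := by exact_mod_cast Int.algebraMap_away_injective (by omega) h'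
  rcases Nat.pow_eq_one.mp hpn with h1 | h0 <;> omega

lemma neg_one_notMem_zpowers_awayUnit (hp : 1 < p) : -1 ∉ Subgroup.zpowers (awayUnit p) := by
  have : NeZero p := ⟨by omega⟩
  rintro ⟨k, hk : awayUnit p ^ k = -1⟩
  obtain rfl | hk0 := eq_or_ne k 0
  · have h := congrArg (fun u : ℤ[1/p]ˣ ↦ (u : ℤ[1/p])) hk
    simp only [zpow_zero, Units.val_one, Units.val_neg] at h
    simpa [ringChar.eq_zero] using neg_one_eq_one_iff.mp h.symm
  · refine not_isOfFinOrder_awayUnit hp (isOfFinOrder_iff_zpow_eq_one.mpr ⟨2 * k, by omega, ?_⟩)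
    rw [mul_comm, zpow_mul, hk]
    exact Units.ext (by simp)

lemma mem_zpowers_awayUnit_or_neg_mem (hp : p.Prime) (u : ℤ[1/p]ˣ) :
    u ∈ Subgroup.zpowers (awayUnit p) ∨ -u ∈ Subgroup.zpowers (awayUnit p) := by
  obtain ⟨n, c, hc⟩ := IsLocalization.Away.surj (p : ℤ) (u : ℤ[1/p])
  have hcunit : IsUnit (algebraMap ℤ ℤ[1/p] c) :=
    hc ▸ u.isUnit.mul (IsLocalization.Away.algebraMap_pow_isUnit _ n)
  obtain ⟨k, hk⟩ := (IsLocalization.Away.algebraMap_isUnit_iff (p : ℤ)).mp hcunit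
  obtain ⟨t, -, hct⟩ := (dvd_prime_pow (Nat.prime_iff_prime_int.mp hp) k).mp hk
  have hdecomp : u * awayUnit p ^ n = awayUnit p ^ t ∨ u * awayUnit p ^ n = -awayUnit p ^ t := by
    rcases Int.associated_iff.mp hct with rfl | rfl
    · left; ext; simpa using hc
    · right; ext; simpa using hc
  rw [Subgroup.mem_zpowers_iff, Subgroup.mem_zpowers_iff]
  refine hdecomp.imp (fun h ↦ ⟨t - n, ?_⟩) (fun h ↦ ⟨t - n, ?_⟩)
  · rw [zpow_sub, zpow_natCast, zpow_natCast, ← h, mul_inv_cancel_right]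
  · rw [zpow_sub, zpow_natCast, zpow_natCast, ← neg_neg (awayUnit p ^ t), ← h, ← neg_mul,
      mul_inv_cancel_right]

lemma index_zpowers_awayUnit (hp : p.Prime) : (Subgroup.zpowers (awayUnit p)).index = 2 := by
  refine Subgroup.index_eq_two_iff_exists_notMem_and.mpr
    ⟨-1, neg_one_notMem_zpowers_awayUnit hp.one_lt, fun u ↦ ?_⟩
  rw [show u * -1 = -u from mul_neg_one u]
  exact (mem_zpowers_awayUnit_or_neg_mem hp u).symm

end IntAway

namespace upperTriangularSL2

variable {p : ℕ}

lemma diagonal_awayUnit_mul_unipotent_one_mul_inv :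
    diagonal (awayUnit p) * unipotent 1 * (diagonal (awayUnit p))⁻¹ = unipotent 1 ^ (p ^ 2) := by
  rw [diagonal_mul_unipotent_mul_inv, ← zpow_natCast, unipotent_zpow]
  congr 1
  simp [sq]

lemma unipotent_mem_closure_diagonal_awayUnit (y : ℤ[1/p]) :
    unipotent y ∈ Subgroup.closure {diagonal (awayUnit p), unipotent 1} := by
  obtain ⟨e, c, hc⟩ := IsLocalization.Away.surj (p : ℤ) y
  simp only [map_natCast, eq_intCast] at hc
  have hy : ((awayUnit p)⁻¹ ^ e : ℤ[1/p]ˣ) * ((awayUnit p)⁻¹ ^ e : ℤ[1/p]ˣ) *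
      (((p : ℤ) ^ e * c) • 1 : ℤ[1/p]) = y := by
    have hinv : (((awayUnit p)⁻¹ : ℤ[1/p]ˣ) : ℤ[1/p]) * p = 1 := by simp
    calc _ = ((((awayUnit p)⁻¹ : ℤ[1/p]ˣ) : ℤ[1/p]) * p) ^ (2 * e) * y := by
          rw [zsmul_eq_mul, mul_one, Int.cast_mul, ← hc, Units.val_pow_eq_pow_val]
          push_cast; ring
      _ = y := by rw [hinv, one_pow, one_mul]
  rw [← hy, ← diagonal_mul_unipotent_mul_inv, ← unipotent_zpow, map_pow, map_inv]
  have hd : diagonal (awayUnit p) ∈ Subgroup.closure {diagonal (awayUnit p), unipotent 1} :=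
    Subgroup.subset_closure (by simp)
  have hu : unipotent 1 ∈ Subgroup.closure {diagonal (awayUnit p), unipotent 1} :=
    Subgroup.subset_closure (by simp)
  have hde := pow_mem (inv_mem hd) e
  exact mul_mem (mul_mem hde (zpow_mem hu _)) (inv_mem hde)

end upperTriangularSL2

namespace BaumslagSolitar

open upperTriangularSL2

variable {p : ℕ}

variable (p) in
noncomputable def toUpperTriangularSL2 : BaumslagSolitar (p ^ 2) →* upperTriangularSL2 ℤ[1/p] :=
  lift diagonal_awayUnit_mul_unipotent_one_mul_inv

lemma toUpperTriangularSL2_injective (hp : 1 < p) :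
    Function.Injective (toUpperTriangularSL2 p) := by
  have : NeZero p := ⟨by omega⟩
  refine lift_injective _ topLeft ?_ (topLeft_unipotent 1) not_isOfFinOrder_unipotent_one
  rw [topLeft_diagonal]
  exact not_isOfFinOrder_awayUnit hp

lemma range_toUpperTriangularSL2 :
    (toUpperTriangularSL2 p).range = (Subgroup.zpowers (awayUnit p)).comap topLeft := by
  rw [toUpperTriangularSL2, range_lift]
  apply le_antisymm
  · rw [Subgroup.closure_le, Set.insert_subset_iff, Set.singleton_subset_iff]
    exact ⟨by simp, by simp⟩
  · intro g hg
    obtain ⟨k, hk⟩ := Subgroup.mem_zpowers_iff.mp hg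
    rw [eq_diagonal_topLeft_mul_unipotent g, ← hk, map_zpow]
    exact mul_mem (zpow_mem (Subgroup.subset_closure (by simp)) k)
      (unipotent_mem_closure_diagonal_awayUnit _)

end BaumslagSolitar

/-- for a prime `p`, the Baumslag–Solitar group `BS(1, p²)` embeds as an
index-2 subgroup of `B₂(ℤ[1/p])`, the upper triangular subgroup of `SL₂(ℤ[1/p])`. -/
theorem baumslagSolitar_index_two_in_B2
    (p : ℕ) (hp : p.Prime) :
    ∃ φ : BaumslagSolitar (p ^ 2) →* upperTriangularSL2 (Localization.Away (p : ℤ)),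
      Function.Injective φ ∧ φ.range.index = 2 := by
  refine ⟨BaumslagSolitar.toUpperTriangularSL2 p,
    BaumslagSolitar.toUpperTriangularSL2_injective hp.one_lt, ?_⟩
  rw [BaumslagSolitar.range_toUpperTriangularSL2, Subgroup.index_comap_of_surjective _
    (Function.LeftInverse.surjective upperTriangularSL2.topLeft_diagonal),
    index_zpowers_awayUnit hp]
end

section
/- Let σ denote the nontrivial element of the Galois group of ℚ(√2)/ℚ applied entrywise to matrices. Then the map B_n(ℤ[√2]) → SL_n(ℝ) × SL_n(ℝ) given by M ↦ (M, σ(M)) is an injective group homomorphism with discrete image. -/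
/-
The product of the two real images `x` and `σ(x)` of an element of `ℤ[√d]` is its norm, an integer
that vanishes only at `0` when `d` is not a square. So if `x - y` and `σ(x) - σ(y)` both have
absolute value below `1`, then `x = y`; entrywise, two matrices whose images in `SL_n(ℝ) × SL_n(ℝ)`
are at sup-distance below `1` coincide. This separation gives both injectivity and discreteness.
-/

set_option synthInstance.maxHeartbeats 1000000
set_option maxHeartbeats 1000000

/-- The group `B_n(R)` of upper triangular matrices in `SL_n(R)`. -/
def upperTriangularSL (n : ℕ) (R : Type*) [CommRing R] :
    Subgroup (Matrix.SpecialLinearGroup (Fin n) R) where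
  carrier := {A | ((A : Matrix (Fin n) (Fin n) R)).BlockTriangular id}
  one_mem' := by
    show ((1 : Matrix.SpecialLinearGroup (Fin n) R) : Matrix (Fin n) (Fin n) R).BlockTriangular id
    simpa using Matrix.blockTriangular_one
  mul_mem' := by
    intro A B hA hB
    show ((A * B : Matrix.SpecialLinearGroup (Fin n) R) : Matrix (Fin n) (Fin n) R).BlockTriangular id
    rw [Matrix.SpecialLinearGroup.coe_mul]
    exact Matrix.BlockTriangular.mul hA hB
  inv_mem' := by
    intro A hA
    show ((A⁻¹ : Matrix.SpecialLinearGroup (Fin n) R) : Matrix (Fin n) (Fin n) R).BlockTriangular id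
    rw [Matrix.SpecialLinearGroup.coe_inv]
    have hdet : ((A : Matrix (Fin n) (Fin n) R)).det = 1 := A.2
    have : Invertible ((A : Matrix (Fin n) (Fin n) R)) :=
      Matrix.invertibleOfIsUnitDet _ (by rw [hdet]; exact isUnit_one)
    have hinv := Matrix.blockTriangular_inv_of_blockTriangular hA
    rwa [Matrix.inv_def, hdet, Ring.inverse_one, one_smul] at hinv

noncomputable section

/-- The embedding `ℤ[√2] → ℝ`. -/
def sqrt2ToReal : ℤ√2 →+* ℝ := Zsqrtd.toReal (by norm_num)

/-- The Galois twist `a + b√2 ↦ a - b√2` followed by the embedding into `ℝ`. -/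
def sqrt2ConjToReal : ℤ√2 →+* ℝ := sqrt2ToReal.comp (starRingEnd (ℤ√2))

/-- The homomorphism `B_n(ℤ[√2]) → SL_n(ℝ) × SL_n(ℝ)`, `M ↦ (M, σ(M))`. -/
def galoisEmbedding (n : ℕ) :
    upperTriangularSL n (ℤ√2) →*
      Matrix.SpecialLinearGroup (Fin n) ℝ × Matrix.SpecialLinearGroup (Fin n) ℝ :=
  ((Matrix.SpecialLinearGroup.map sqrt2ToReal).comp
      (upperTriangularSL n (ℤ√2)).subtype).prod
    ((Matrix.SpecialLinearGroup.map sqrt2ConjToReal).comp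
      (upperTriangularSL n (ℤ√2)).subtype)

-- The entrywise sup metric induces the product topology, so it can detect discreteness.
open scoped Matrix.Norms.Elementwise

namespace Zsqrtd

variable {d : ℤ}

theorem toReal_mul_toReal_star (h : 0 ≤ d) (x : ℤ√d) :
    toReal h x * toReal h (star x) = x.norm := by
  rw [← map_mul, ← norm_eq_mul_conj, map_intCast]

theorem eq_of_abs_toReal_sub_lt_one (h : 0 ≤ d) (hd : ∀ n : ℤ, d ≠ n * n) {x y : ℤ√d}
    (h₁ : |toReal h x - toReal h y| < 1) (h₂ : |toReal h (star x) - toReal h (star y)| < 1) :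
    x = y := by
  rw [← map_sub] at h₁ h₂
  rw [← star_sub] at h₂
  have hnorm : |((x - y).norm : ℝ)| < 1 := by
    rw [← toReal_mul_toReal_star h, abs_mul]
    exact mul_lt_one_of_nonneg_of_lt_one_left (abs_nonneg _) h₁ h₂.le
  rw [← sub_eq_zero, ← norm_eq_zero hd, ← Int.abs_lt_one_iff]
  exact_mod_cast hnorm

end Zsqrtd

theorem two_ne_int_mul_self (n : ℤ) : (2 : ℤ) ≠ n * n :=
  fun h => Int.sq_ne_two_mod_four n (by rw [← h]; rfl)

theorem eq_of_dist_sqrt2ToReal_lt_one {x y : ℤ√2}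
    (h : dist (sqrt2ToReal x, sqrt2ConjToReal x) (sqrt2ToReal y, sqrt2ConjToReal y) < 1) :
    x = y := by
  rw [Prod.dist_eq, max_lt_iff, Real.dist_eq, Real.dist_eq] at h
  exact Zsqrtd.eq_of_abs_toReal_sub_lt_one _ two_ne_int_mul_self h.1 h.2

def galoisMatrixPair {m n : Type*} (M : Matrix m n (ℤ√2)) : Matrix m n ℝ × Matrix m n ℝ :=
  (M.map sqrt2ToReal, M.map sqrt2ConjToReal)

theorem eq_of_dist_galoisMatrixPair_lt_one {m n : Type*} [Fintype m] [Fintype n]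
    {M N : Matrix m n (ℤ√2)} (h : dist (galoisMatrixPair M) (galoisMatrixPair N) < 1) :
    M = N := by
  rw [Prod.dist_eq, max_lt_iff, dist_eq_norm, dist_eq_norm, Matrix.norm_lt_iff one_pos,
    Matrix.norm_lt_iff one_pos] at h
  refine Matrix.ext fun i j => eq_of_dist_sqrt2ToReal_lt_one ?_
  rw [Prod.dist_eq, max_lt_iff, dist_eq_norm, dist_eq_norm]
  exact ⟨h.1 i j, h.2 i j⟩

theorem galoisEmbedding_coe_eq_galoisMatrixPair (n : ℕ) (A : upperTriangularSL n (ℤ√2)) :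
    (((galoisEmbedding n A).1 : Matrix (Fin n) (Fin n) ℝ),
      ((galoisEmbedding n A).2 : Matrix (Fin n) (Fin n) ℝ)) =
      galoisMatrixPair (A : Matrix (Fin n) (Fin n) (ℤ√2)) :=
  rfl

theorem galoisEmbedding_injective_discrete_general (n : ℕ) :
    Function.Injective (galoisEmbedding n) ∧
    DiscreteTopology
      ↥(Set.range (fun A : upperTriangularSL n (ℤ√2) =>
        ((((galoisEmbedding n) A).1 : Matrix (Fin n) (Fin n) ℝ),
         (((galoisEmbedding n) A).2 : Matrix (Fin n) (Fin n) ℝ)))) := by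
  have hsep : ∀ A B : upperTriangularSL n (ℤ√2),
      dist (galoisMatrixPair (A : Matrix (Fin n) (Fin n) (ℤ√2)))
        (galoisMatrixPair (B : Matrix (Fin n) (Fin n) (ℤ√2))) < 1 → A = B :=
    fun A B h => Subtype.ext (Subtype.ext (eq_of_dist_galoisMatrixPair_lt_one h))
  refine ⟨fun A B h => hsep A B ?_, DiscreteTopology.of_forall_le_dist one_pos ?_⟩
  · rw [← galoisEmbedding_coe_eq_galoisMatrixPair, ← galoisEmbedding_coe_eq_galoisMatrixPair, h,
      dist_self]
    exact one_pos
  · rintro ⟨_, A, rfl⟩ ⟨_, B, rfl⟩ hne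
    by_contra! hlt
    obtain rfl := hsep A B hlt
    exact hne rfl

/-- the map `B_n(ℤ[√2]) → SL_n(ℝ) × SL_n(ℝ)`, `M ↦ (M, σ(M))` (with `σ`
the nontrivial Galois automorphism of `ℚ(√2)/ℚ` applied entrywise), is an injective
group homomorphism with discrete image (stated via the underlying matrices, with the
product of the real topologies). -/
theorem galoisEmbedding_injective_discrete (n : ℕ) (hn : 2 ≤ n) :
    Function.Injective (galoisEmbedding n) ∧
    DiscreteTopology
      ↥(Set.range (fun A : upperTriangularSL n (ℤ√2) =>
        ((((galoisEmbedding n) A).1 : Matrix (Fin n) (Fin n) ℝ),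
         (((galoisEmbedding n) A).2 : Matrix (Fin n) (Fin n) ℝ)))) :=
  galoisEmbedding_injective_discrete_general n
end
end

section
/- Suppose π : X → X_p is distance nonincreasing, σ : X_p → X is an isometric section of π, and φ : X → X is a (K,C)-quasi-isometry such that there is a constant A with: for every x ∈ X_p there exists y ∈ X_p with Hd(φ(π⁻¹(x)), π⁻¹(y)) ≤ A, and moreover Hd(π⁻¹(x),π⁻¹(y)) = d(x,y) for all x,y ∈ X_p. Then φ_π := π ∘ φ ∘ σ : X_p → X_p is a (K, 4KA + KC)-quasi-isometric embedding of X_p. -/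
/-!
Let `p i = φ (σ x i)` and let `y i` be a base point whose fiber is `A`-close to `φ (π⁻¹ {x i})`.
Every point of the fiber over `x₂` is at distance `≥ d(x₁, x₂)` from `σ x₁`, so `p₁` is at
distance `≥ d(x₁, x₂)/K - C` from `φ (π⁻¹ {x₂})`, hence `≥ d(x₁, x₂)/K - C - A` from the
fiber over `y₂`. Since fibers are at Hausdorff distance equal to the distance of their base
points, that fiber is within `A + d(y₁, y₂)` of `p₁`; and since `π` is `1`-Lipschitz, `π pᵢ` is
`A`-close to `yᵢ`. Altogether `d(x₁, x₂)/K - C - 4A ≤ d(π p₁, π p₂)`.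
-/

open Metric

theorem Metric.infDist_le_infDist_add_of_hausdorffEDist_le {α : Type*} [PseudoMetricSpace α]
    {s t : Set α} {r : ℝ} (hr : 0 ≤ r) (h : hausdorffEDist s t ≤ ENNReal.ofReal r) (x : α) :
    infDist x t ≤ infDist x s + r :=
  (infDist_le_infDist_add_hausdorffDist (ne_top_of_le_ne_top ENNReal.ofReal_ne_top h)).trans
    (add_le_add_right (ENNReal.toReal_le_of_le_ofReal hr h) _)

theorem Metric.infDist_le_of_mem_of_hausdorffEDist_le {α : Type*} [PseudoMetricSpace α]
    {s t : Set α} {r : ℝ} {x : α} (hx : x ∈ s) (hr : 0 ≤ r)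
    (h : hausdorffEDist s t ≤ ENNReal.ofReal r) : infDist x t ≤ r := by
  simpa [infDist_zero_of_mem hx] using infDist_le_infDist_add_of_hausdorffEDist_le hr h x

theorem Metric.le_infDist_image_of_forall_le_dist {α β : Type*} [PseudoMetricSpace α]
    [PseudoMetricSpace β] {φ : α → β} {K C r : ℝ} (hK : 0 ≤ K)
    (hφ : ∀ a b, (1 / K) * dist a b - C ≤ dist (φ a) (φ b)) {s : Set α} (hs : s.Nonempty)
    {a : α} (h : ∀ b ∈ s, r ≤ dist a b) : (1 / K) * r - C ≤ infDist (φ a) (φ '' s) := by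
  refine (le_infDist (hs.image φ)).2 ?_
  rintro _ ⟨b, hb, rfl⟩
  calc (1 / K) * r - C ≤ (1 / K) * dist a b - C := by gcongr; exact h b hb
    _ ≤ dist (φ a) (φ b) := hφ a b

section Fibers

variable {X Y : Type*} [PseudoMetricSpace X] [PseudoMetricSpace Y] {π : X → Y}

theorem dist_le_dist_of_mem_fiber (hπ : ∀ a b, dist (π a) (π b) ≤ dist a b) (p : X) {y : Y}
    {q : X} (hq : q ∈ π ⁻¹' {y}) : dist (π p) y ≤ dist p q :=
  Set.mem_singleton_iff.1 hq ▸ hπ p q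

theorem dist_le_infDist_fiber (hπ : ∀ a b, dist (π a) (π b) ≤ dist a b) (p : X) {y : Y}
    (hne : (π ⁻¹' {y}).Nonempty) : dist (π p) y ≤ infDist p (π ⁻¹' {y}) :=
  (le_infDist hne).2 fun _ hq ↦ dist_le_dist_of_mem_fiber hπ p hq

theorem infDist_fiber_le_infDist_fiber_add_dist
    (hFib : ∀ x y : Y, hausdorffEDist (π ⁻¹' {x}) (π ⁻¹' {y}) = edist x y) (p : X) (y₁ y₂ : Y) :
    infDist p (π ⁻¹' {y₂}) ≤ infDist p (π ⁻¹' {y₁}) + dist y₁ y₂ :=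
  infDist_le_infDist_add_of_hausdorffEDist_le dist_nonneg
    ((hFib y₁ y₂).trans_le (edist_dist y₁ y₂).le) p

theorem one_div_mul_dist_sub_le_dist_proj_comp_section {σ : Y → X}
    (hπ : ∀ a b, dist (π a) (π b) ≤ dist a b) (hsec : ∀ x, π (σ x) = x)
    {K C A : ℝ} (hK : 0 ≤ K) (hA : 0 ≤ A) {φ : X → X}
    (hφ : ∀ a b, (1 / K) * dist a b - C ≤ dist (φ a) (φ b))
    (hfib : ∀ x y : Y, hausdorffEDist (π ⁻¹' {x}) (π ⁻¹' {y}) = edist x y)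
    (hφfib : ∀ x : Y, ∃ y : Y,
      hausdorffEDist (φ '' (π ⁻¹' {x})) (π ⁻¹' {y}) ≤ ENNReal.ofReal A)
    (x₁ x₂ : Y) :
    (1 / K) * dist x₁ x₂ - (C + 4 * A) ≤ dist (π (φ (σ x₁))) (π (φ (σ x₂))) := by
  have hmem : ∀ x, σ x ∈ π ⁻¹' {x} := fun x ↦ hsec x
  have hne : ∀ x, (π ⁻¹' {x}).Nonempty := fun x ↦ ⟨σ x, hmem x⟩
  have hbase : ∀ x y, hausdorffEDist (φ '' (π ⁻¹' {x})) (π ⁻¹' {y}) ≤ ENNReal.ofReal A →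
      infDist (φ (σ x)) (π ⁻¹' {y}) ≤ A ∧ dist (π (φ (σ x))) y ≤ A := fun x y h ↦
    have hnear := infDist_le_of_mem_of_hausdorffEDist_le (Set.mem_image_of_mem φ (hmem x)) hA h
    ⟨hnear, (dist_le_infDist_fiber hπ _ (hne y)).trans hnear⟩
  obtain ⟨y₁, hy₁⟩ := hφfib x₁
  obtain ⟨y₂, hy₂⟩ := hφfib x₂
  set p₁ := φ (σ x₁)
  set p₂ := φ (σ x₂)
  have hfar : (1 / K) * dist x₁ x₂ - C ≤ infDist p₁ (φ '' (π ⁻¹' {x₂})) :=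
    le_infDist_image_of_forall_le_dist hK hφ (hne x₂) fun b hb ↦ by
      simpa only [hsec] using dist_le_dist_of_mem_fiber hπ (σ x₁) hb
  have hswap : infDist p₁ (φ '' (π ⁻¹' {x₂})) ≤ infDist p₁ (π ⁻¹' {y₂}) + A :=
    infDist_le_infDist_add_of_hausdorffEDist_le hA (hausdorffEDist_comm.trans_le hy₂) p₁
  have hchange := infDist_fiber_le_infDist_fiber_add_dist hfib p₁ y₁ y₂
  have htri : dist y₁ y₂ ≤ dist (π p₁) y₁ + dist (π p₁) (π p₂) + dist (π p₂) y₂ := by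
    simpa only [dist_comm y₁] using dist_triangle4 y₁ (π p₁) (π p₂) y₂
  linarith [hbase x₁ y₁ hy₁, hbase x₂ y₂ hy₂]

end Fibers

theorem induced_base_map_is_QIE_general
    {X Xp : Type*} [MetricSpace X] [MetricSpace Xp]
    (π : X → Xp) (σ : Xp → X)
    (hπ : ∀ a b : X, dist (π a) (π b) ≤ dist a b)
    (hσ : Isometry σ) (hsec : ∀ x : Xp, π (σ x) = x)
    (K C A : ℝ) (hK : 1 ≤ K) (hC : 0 ≤ C) (hA : 0 ≤ A)
    (φ : X → X)
    (hφemb : ∀ a b : X, (1 / K) * dist a b - C ≤ dist (φ a) (φ b) ∧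
      dist (φ a) (φ b) ≤ K * dist a b + C)
    (hFib : ∀ x y : Xp,
      EMetric.hausdorffEdist (π ⁻¹' {x}) (π ⁻¹' {y}) = edist x y)
    (hWhyte : ∀ x : Xp, ∃ y : Xp,
      EMetric.hausdorffEdist (φ '' (π ⁻¹' {x})) (π ⁻¹' {y}) ≤ ENNReal.ofReal A) :
    ∀ x₁ x₂ : Xp,
      (1 / K) * dist x₁ x₂ - (4 * K * A + K * C)
          ≤ dist (π (φ (σ x₁))) (π (φ (σ x₂))) ∧
        dist (π (φ (σ x₁))) (π (φ (σ x₂)))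
          ≤ K * dist x₁ x₂ + (4 * K * A + K * C) := by
  intro x₁ x₂
  have hconst : C + 4 * A ≤ 4 * K * A + K * C := by
    nlinarith [mul_nonneg (sub_nonneg.2 hK) (add_nonneg hC hA)]
  constructor
  · linarith [one_div_mul_dist_sub_le_dist_proj_comp_section hπ hsec (zero_le_one.trans hK) hA
      (fun a b ↦ (hφemb a b).1) hFib hWhyte x₁ x₂]
  · calc dist (π (φ (σ x₁))) (π (φ (σ x₂))) ≤ dist (φ (σ x₁)) (φ (σ x₂)) := hπ _ _
      _ ≤ K * dist x₁ x₂ + C := hσ.dist_eq x₁ x₂ ▸ (hφemb _ _).2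
      _ ≤ K * dist x₁ x₂ + (4 * K * A + K * C) := by linarith

/-- if `π : X → X_p` is distance nonincreasing with isometric section
`σ`, the Hausdorff distance between fibers equals the base distance, and
`φ : X → X` is a `(K,C)`-quasi-isometry mapping each fiber within Hausdorff distance
`A` of some fiber, then `φ_π = π ∘ φ ∘ σ` is a `(K, 4KA + KC)`-quasi-isometric
embedding of `X_p`. -/
theorem induced_base_map_is_QIE
    {X Xp : Type*} [MetricSpace X] [MetricSpace Xp]
    (π : X → Xp) (σ : Xp → X)
    (hπ : ∀ a b : X, dist (π a) (π b) ≤ dist a b)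
    (hσ : Isometry σ) (hsec : ∀ x : Xp, π (σ x) = x)
    (K C A : ℝ) (hK : 1 ≤ K) (hC : 0 ≤ C) (hA : 0 ≤ A)
    (φ : X → X)
    (hφemb : ∀ a b : X, (1 / K) * dist a b - C ≤ dist (φ a) (φ b) ∧
      dist (φ a) (φ b) ≤ K * dist a b + C)
    (hφdense : ∃ D : ℝ, 0 ≤ D ∧ ∀ z : X, ∃ a : X, dist z (φ a) ≤ D)
    (hFib : ∀ x y : Xp,
      EMetric.hausdorffEdist (π ⁻¹' {x}) (π ⁻¹' {y}) = edist x y)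
    (hWhyte : ∀ x : Xp, ∃ y : Xp,
      EMetric.hausdorffEdist (φ '' (π ⁻¹' {x})) (π ⁻¹' {y}) ≤ ENNReal.ofReal A) :
    ∀ x₁ x₂ : Xp,
      (1 / K) * dist x₁ x₂ - (4 * K * A + K * C)
          ≤ dist (π (φ (σ x₁))) (π (φ (σ x₂))) ∧
        dist (π (φ (σ x₁))) (π (φ (σ x₂)))
          ≤ K * dist x₁ x₂ + (4 * K * A + K * C) :=
  induced_base_map_is_QIE_general π σ hπ hσ hsec K C A hK hC hA φ hφemb hFib hWhyte
end

section
/- The shift action of ℤ on G((t)), n · Σ gᵢtⁱ = Σ gᵢt^{i−n}, satisfies |n · a| = e^n · |a| for all nonidentity a ∈ G((t)); consequently the induced map of T_G, n · ρ_a(t) = ρ_{n·a}(t+n), is a well-defined simplicial automorphism, and for n > 0 it translates the line ℓ_1 by n towards the end ∞ (i.e., increases height by n). -/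
/-- The group `G((t))` of formal Laurent series with coefficients in `G`:
functions `ℤ → G` that are eventually the identity in the negative direction,
under componentwise multiplication. -/
def LaurentSeriesGroup (G : Type*) [Group G] : Subgroup (ℤ → G) where
  carrier := {g : ℤ → G | ∃ N : ℤ, ∀ i < N, g i = 1}
  one_mem' := ⟨0, fun _ _ => rfl⟩
  mul_mem' := by
    rintro a b ⟨N, hN⟩ ⟨M, hM⟩
    refine ⟨min N M, fun i hi => ?_⟩
    have h1 := hN i (lt_of_lt_of_le hi (min_le_left _ _))
    have h2 := hM i (lt_of_lt_of_le hi (min_le_right _ _))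
    simp [Pi.mul_apply, h1, h2]
  inv_mem' := by
    rintro a ⟨N, hN⟩
    exact ⟨N, fun i hi => by simp [Pi.inv_apply, hN i hi]⟩

/-- The shift action of `n ∈ ℤ` on `G((t))`: `n · Σ gᵢtⁱ = Σ gᵢt^{i-n}`, i.e.
`(n · a)(i) = a (i + n)`. -/
def shiftLS (G : Type*) [Group G] (n : ℤ) (a : LaurentSeriesGroup G) :
    LaurentSeriesGroup G :=
  ⟨fun i => (a : ℤ → G) (i + n), by
    obtain ⟨N, hN⟩ := a.2
    exact ⟨N - n, fun i hi => hN (i + n) (by omega)⟩⟩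

/-- The gluing relation defining the tree `T_G` (see statement 17). -/
def treeRel (G : Type*) [Group G] (norm : LaurentSeriesGroup G → ℝ) :
    LaurentSeriesGroup G × ℝ → LaurentSeriesGroup G × ℝ → Prop :=
  fun x y => x.2 = y.2 ∧ (x.1 = y.1 ∨ Real.log (norm (x.1⁻¹ * y.1)) ≤ x.2)


lemma exists_min_index {G : Type*} [Group G] (a : LaurentSeriesGroup G) (ha : a ≠ 1) :
    ∃ N : ℤ, (a : ℤ → G) N ≠ 1 ∧ ∀ i < N, (a : ℤ → G) i = 1 := by
  obtain ⟨N₀, hN₀⟩ := a.2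
  have hne : ∃ i : ℤ, (a : ℤ → G) i ≠ 1 := by
    by_contra h
    push_neg at h
    exact ha (Subtype.ext (funext fun i => h i))
  obtain ⟨j, hj⟩ := hne
  obtain ⟨N, hN1, hN2⟩ := Int.exists_least_of_bdd
    (P := fun i => (a : ℤ → G) i ≠ 1)
    ⟨N₀, fun i hi => by by_contra hb; exact hi (hN₀ i (by omega))⟩ ⟨j, hj⟩
  refine ⟨N, hN1, fun i hi => ?_⟩
  by_contra hb
  exact absurd (hN2 i hb) (by omega)

lemma shiftLS_apply {G : Type*} [Group G] (n : ℤ) (a : LaurentSeriesGroup G) (i : ℤ) :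
    ((shiftLS G n a : LaurentSeriesGroup G) : ℤ → G) i = (a : ℤ → G) (i + n) := rfl

lemma shiftLS_leftInv {G : Type*} [Group G] (n : ℤ) (a : LaurentSeriesGroup G) :
    shiftLS G (-n) (shiftLS G n a) = a := by
  apply Subtype.ext
  funext i
  show (a : ℤ → G) (i + -n + n) = (a : ℤ → G) i
  rw [neg_add_cancel_right]

lemma shiftLS_one {G : Type*} [Group G] (n : ℤ) : shiftLS G n (1 : LaurentSeriesGroup G) = 1 :=
  rfl

lemma shiftLS_mul {G : Type*} [Group G] (n : ℤ) (a b : LaurentSeriesGroup G) :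
    shiftLS G n (a * b) = shiftLS G n a * shiftLS G n b := rfl

lemma shiftLS_inv {G : Type*} [Group G] (n : ℤ) (a : LaurentSeriesGroup G) :
    shiftLS G n a⁻¹ = (shiftLS G n a)⁻¹ := rfl

/-- the shift `n · Σ gᵢtⁱ = Σ gᵢt^{i-n}` satisfies `|n · a| = eⁿ|a|` for
nonidentity `a`; consequently the induced map `ρ_a(t) ↦ ρ_{n·a}(t+n)` of `T_G` is a
well-defined automorphism (a bijection compatible with the gluing relation), it fixes
the line `ℓ_1` (as `n · 1 = 1`), and it raises the height by exactly `n` (for `n > 0`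
it translates `ℓ_1` by `n` towards the end `∞`). -/
theorem shift_scales_norm_and_translates_tree
    (G : Type*) [Group G] [Finite G] (norm : LaurentSeriesGroup G → ℝ)
    (hnorm_one : norm 1 = 0)
    (hnorm : ∀ a : LaurentSeriesGroup G, a ≠ 1 → ∀ N : ℤ,
      ((a : ℤ → G) N ≠ 1 ∧ ∀ i < N, (a : ℤ → G) i = 1) →
      norm a = Real.exp (-(N : ℝ))) (n : ℤ) :
    (∀ a : LaurentSeriesGroup G, a ≠ 1 →
      norm (shiftLS G n a) = Real.exp (n : ℝ) * norm a) ∧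
    Function.Bijective (shiftLS G n) ∧
    shiftLS G n 1 = 1 ∧
    (∀ x y : LaurentSeriesGroup G × ℝ, treeRel G norm x y →
      treeRel G norm (shiftLS G n x.1, x.2 + n) (shiftLS G n y.1, y.2 + n)) ∧
    (∀ x : LaurentSeriesGroup G × ℝ, (shiftLS G n x.1, x.2 + n).2 = x.2 + n) := by
  have hscale : ∀ a : LaurentSeriesGroup G, a ≠ 1 →
      norm (shiftLS G n a) = Real.exp (n : ℝ) * norm a := by
    intro a ha
    obtain ⟨N, hN1, hN2⟩ := exists_min_index a ha
    have hsa : shiftLS G n a ≠ 1 := by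
      intro h
      apply hN1
      have := congrArg (fun b => ((b : LaurentSeriesGroup G) : ℤ → G) (N - n)) h
      simpa [shiftLS_apply, show N - n + n = N by omega] using this
    have h1 : norm a = Real.exp (-(N : ℝ)) := hnorm a ha N ⟨hN1, hN2⟩
    have h2 : norm (shiftLS G n a) = Real.exp (-((N - n : ℤ) : ℝ)) := by
      apply hnorm _ hsa (N - n)
      constructor
      · simpa [shiftLS_apply, show N - n + n = N by omega] using hN1
      · intro i hi
        rw [shiftLS_apply]
        exact hN2 _ (by omega)
    rw [h1, h2, ← Real.exp_add]
    congr 1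
    push_cast
    ring
  have hbij : Function.Bijective (shiftLS G n) := by
    refine ⟨fun a b hab => ?_, fun b => ⟨shiftLS G (-n) b, ?_⟩⟩
    · have := congrArg (shiftLS G (-n)) hab
      rwa [shiftLS_leftInv, shiftLS_leftInv] at this
    · have := shiftLS_leftInv (-n) b
      simpa using this
  refine ⟨hscale, hbij, rfl, ?_, fun x => rfl⟩
  rintro x y ⟨h1, h2⟩
  refine ⟨by rw [h1], ?_⟩
  rcases h2 with h2 | h2
  · exact Or.inl (by rw [h2])
  · by_cases hb : x.1⁻¹ * y.1 = 1
    · left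
      have hxy : x.1 = y.1 := by
        have := congrArg (x.1 * ·) hb
        simpa [mul_assoc] using this.symm
      rw [hxy]
    · right
      rw [← shiftLS_inv, ← shiftLS_mul, hscale _ hb]
      obtain ⟨N, hN⟩ := exists_min_index _ hb
      have hv := hnorm _ hb N hN
      rw [hv] at h2 ⊢
      rw [Real.log_exp] at h2
      rw [← Real.exp_add, Real.log_exp]
      show (n : ℝ) + -N ≤ x.2 + n
      linarith
end
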